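/- arXiv:1906.01467 — 4 statements merged into one kernel-verified Lean document; each statement's English description precedes it below -/
import Mathlib

section
/- With v(x) = (x1²+x2²) - 4ix3, w(x) = (x1²+x2²) + 4ix3, and u = v^η w^τ for real η, τ, one has, away from the origin, X1u·X1ū + X2u·X2ū = 8(η²+τ²) v^(η+τ-1) w^(η+τ-1) (x1²+x2²). -/
noncomputable section
open Complex

abbrev P3 : Type := ℝ × ℝ × ℝ

/-- Heisenberg vector field X1 = ∂/∂x1 - (x2/2) ∂/∂x3. -/
def X1 (u : P3 → ℂ) (p : P3) : ℂ :=
  fderiv ℝ u p (1, 0, 0) - (p.2.1 : ℂ) / 2 * fderiv ℝ u p (0, 0, 1)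

/-- Heisenberg vector field X2 = ∂/∂x2 + (x1/2) ∂/∂x3. -/
def X2 (u : P3 → ℂ) (p : P3) : ℂ :=
  fderiv ℝ u p (0, 1, 0) + (p.1 : ℂ) / 2 * fderiv ℝ u p (0, 0, 1)

/-- X3 = ∂/∂x3. -/
def X3 (u : P3 → ℂ) (p : P3) : ℂ := fderiv ℝ u p (0, 0, 1)

def vH (p : P3) : ℂ := (p.1 : ℂ) ^ 2 + (p.2.1 : ℂ) ^ 2 - 4 * Complex.I * (p.2.2 : ℂ)

def wH (p : P3) : ℂ := (p.1 : ℂ) ^ 2 + (p.2.1 : ℂ) ^ 2 + 4 * Complex.I * (p.2.2 : ℂ)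

/-- Squared horizontal gradient norm of a complex-valued function. -/
def nrm2H (u : P3 → ℂ) (p : P3) : ℝ :=
  (X1 u p * (starRingEnd ℂ) (X1 u p) + X2 u p * (starRingEnd ℂ) (X2 u p)).re

lemma fderiv_uH (c d : ℂ) (p : P3) (hv : vH p ∈ slitPlane) (hw : wH p ∈ slitPlane) (e : P3) :
    fderiv ℝ (fun r => vH r ^ c * wH r ^ d) p e =
      (c * vH p ^ (c-1) * (2 * p.1 * e.1 + 2 * p.2.1 * e.2.1 - 4 * I * e.2.2)) * wH p ^ d
      + vH p ^ c * (d * wH p ^ (d-1) * (2 * p.1 * e.1 + 2 * p.2.1 * e.2.1 + 4 * I * e.2.2)) := by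
  have hx1 : HasFDerivAt (fun r : P3 => (r.1 : ℂ))
      (Complex.ofRealCLM.comp (ContinuousLinearMap.fst ℝ ℝ (ℝ × ℝ))) p :=
    Complex.ofRealCLM.hasFDerivAt.comp p (hasFDerivAt_fst)
  have hx2 : HasFDerivAt (fun r : P3 => (r.2.1 : ℂ))
      (Complex.ofRealCLM.comp ((ContinuousLinearMap.fst ℝ ℝ ℝ).comp (ContinuousLinearMap.snd ℝ ℝ (ℝ × ℝ)))) p :=
    Complex.ofRealCLM.hasFDerivAt.comp p (hasFDerivAt_snd.fst)
  have hx3 : HasFDerivAt (fun r : P3 => (r.2.2 : ℂ))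
      (Complex.ofRealCLM.comp ((ContinuousLinearMap.snd ℝ ℝ ℝ).comp (ContinuousLinearMap.snd ℝ ℝ (ℝ × ℝ)))) p :=
    Complex.ofRealCLM.hasFDerivAt.comp p (hasFDerivAt_snd.snd)
  have hveq : vH = fun r : P3 => ((r.1:ℂ) * r.1 + (r.2.1:ℂ) * r.2.1 - 4*I*r.2.2) := by
    funext r; simp [vH, pow_two]
  have hweq : wH = fun r : P3 => ((r.1:ℂ) * r.1 + (r.2.1:ℂ) * r.2.1 + 4*I*r.2.2) := by
    funext r; simp [wH, pow_two]
  have hvd : HasFDerivAt vH _ p := hveq ▸ (show HasFDerivAt (fun r : P3 => ((r.1:ℂ) * r.1 + (r.2.1:ℂ) * r.2.1 - 4*I*r.2.2)) _ p from (((hx1.mul hx1).add (hx2.mul hx2)).sub (hx3.const_mul (4*I))))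
  have hwd : HasFDerivAt wH _ p := hweq ▸ (show HasFDerivAt (fun r : P3 => ((r.1:ℂ) * r.1 + (r.2.1:ℂ) * r.2.1 + 4*I*r.2.2)) _ p from (((hx1.mul hx1).add (hx2.mul hx2)).add (hx3.const_mul (4*I))))
  have hcv : HasFDerivAt (fun z : ℂ => z ^ c)
      (ContinuousLinearMap.smulRight (1 : ℂ →L[ℂ] ℂ) (c * vH p ^ (c-1))) (vH p) :=
    (Complex.hasStrictDerivAt_cpow_const hv).hasDerivAt.hasFDerivAt
  have hcw : HasFDerivAt (fun z : ℂ => z ^ d)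
      (ContinuousLinearMap.smulRight (1 : ℂ →L[ℂ] ℂ) (d * wH p ^ (d-1))) (wH p) :=
    (Complex.hasStrictDerivAt_cpow_const hw).hasDerivAt.hasFDerivAt
  have hu : HasFDerivAt (fun r => vH r ^ c * wH r ^ d) _ p :=
    ((hcv.restrictScalars ℝ).comp p hvd).mul ((hcw.restrictScalars ℝ).comp p hwd)
  rw [hu.fderiv]
  simp [ContinuousLinearMap.smul_apply, ContinuousLinearMap.comp_apply, vH, wH]
  ring

theorem heisenberg_gradient_norm_sq (η τ : ℝ) (p : P3) (hp : p ≠ 0) :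
    X1 (fun r => vH r ^ (η : ℂ) * wH r ^ (τ : ℂ)) p *
        (starRingEnd ℂ) (X1 (fun r => vH r ^ (η : ℂ) * wH r ^ (τ : ℂ)) p) +
      X2 (fun r => vH r ^ (η : ℂ) * wH r ^ (τ : ℂ)) p *
        (starRingEnd ℂ) (X2 (fun r => vH r ^ (η : ℂ) * wH r ^ (τ : ℂ)) p) =
      8 * ((η : ℂ) ^ 2 + (τ : ℂ) ^ 2) * vH p ^ ((η : ℂ) + (τ : ℂ) - 1) *
        wH p ^ ((η : ℂ) + (τ : ℂ) - 1) * ((p.1 : ℂ) ^ 2 + (p.2.1 : ℂ) ^ 2) := by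
  set c : ℂ := (η : ℂ) with hc
  set d : ℂ := (τ : ℂ) with hd
  -- positivity of the "radial" part when x3 = 0
  have hpos : p.2.2 = 0 → 0 < p.1 ^ 2 + p.2.1 ^ 2 := by
    intro h3
    have h12 : p.1 ≠ 0 ∨ p.2.1 ≠ 0 := by
      by_contra hcon
      push_neg at hcon
      exact hp (by ext <;> simp [hcon.1, hcon.2, h3])
    rcases h12 with h | h
    · have h1 : 0 < p.1 ^ 2 := by positivity
      nlinarith [sq_nonneg p.2.1]
    · have h1 : 0 < p.2.1 ^ 2 := by positivity
      nlinarith [sq_nonneg p.1]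
  have hvre : (vH p).re = p.1 ^ 2 + p.2.1 ^ 2 := by simp [vH, pow_two]
  have hwre : (wH p).re = p.1 ^ 2 + p.2.1 ^ 2 := by simp [wH, pow_two]
  have hvim : (vH p).im = -(4 * p.2.2) := by simp [vH, pow_two]
  have hwim : (wH p).im = 4 * p.2.2 := by simp [wH, pow_two]
  have hv : vH p ∈ slitPlane := by
    rw [Complex.mem_slitPlane_iff]
    by_cases h3 : p.2.2 = 0
    · left; rw [hvre]; exact hpos h3
    · right; rw [hvim]; intro hcon; apply h3; linarith [hcon]
  have hw : wH p ∈ slitPlane := by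
    rw [Complex.mem_slitPlane_iff]
    by_cases h3 : p.2.2 = 0
    · left; rw [hwre]; exact hpos h3
    · right; rw [hwim]; intro hcon; apply h3; linarith [hcon]
  have hv0 : vH p ≠ 0 := Complex.slitPlane_ne_zero hv
  have hw0 : wH p ≠ 0 := Complex.slitPlane_ne_zero hw
  have hvarg : (vH p).arg ≠ Real.pi := Complex.slitPlane_arg_ne_pi hv
  have hwarg : (wH p).arg ≠ Real.pi := Complex.slitPlane_arg_ne_pi hw
  have hconjv : (starRingEnd ℂ) (vH p) = wH p := by
    simp [vH, wH, map_sub, map_add, map_mul, map_ofNat]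
    try ring
  have hconjw : (starRingEnd ℂ) (wH p) = vH p := by
    simp [vH, wH, map_sub, map_add, map_mul, map_ofNat]
    try ring
  -- conjugation of real powers
  have hconj_pow : ∀ (a : ℝ) (x y : ℂ), x.arg ≠ Real.pi → (starRingEnd ℂ) x = y →
      (starRingEnd ℂ) (x ^ (a : ℂ)) = y ^ (a : ℂ) := by
    intro a x y hx hxy
    have h1 : (starRingEnd ℂ) ((a : ℂ)) = (a : ℂ) := Complex.conj_ofReal a
    have := Complex.conj_cpow x (a : ℂ) hx
    rw [h1] at this
    rw [← this, hxy]
  -- power splitting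
  have hvsplit : vH p ^ (c + d - 1) = vH p ^ (c - 1) * vH p ^ (d - 1) * vH p := by
    rw [show c + d - 1 = (c - 1) + ((d - 1) + 1) by ring, Complex.cpow_add _ _ hv0,
      Complex.cpow_add _ _ hv0, Complex.cpow_one]
    ring
  have hwsplit : wH p ^ (c + d - 1) = wH p ^ (c - 1) * wH p ^ (d - 1) * wH p := by
    rw [show c + d - 1 = (c - 1) + ((d - 1) + 1) by ring, Complex.cpow_add _ _ hw0,
      Complex.cpow_add _ _ hw0, Complex.cpow_one]
    ring
  have hvc : vH p ^ c = vH p ^ (c - 1) * vH p := by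
    conv_lhs => rw [show c = (c - 1) + 1 by ring]
    rw [Complex.cpow_add _ _ hv0, Complex.cpow_one]
  have hwd : wH p ^ d = wH p ^ (d - 1) * wH p := by
    conv_lhs => rw [show d = (d - 1) + 1 by ring]
    rw [Complex.cpow_add _ _ hw0, Complex.cpow_one]
  set A := vH p ^ (c - 1) with hA
  set B := wH p ^ (d - 1) with hB
  set A' := wH p ^ (c - 1) with hA'
  set B' := vH p ^ (d - 1) with hB'
  have hX1 : X1 (fun r => vH r ^ c * wH r ^ d) p =
      2 * A * B * (c * wH p * ((p.1:ℂ) + I * p.2.1) + d * vH p * ((p.1:ℂ) - I * p.2.1)) := by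
    rw [X1, fderiv_uH c d p hv hw, fderiv_uH c d p hv hw]
    simp only [hvc, hwd]
    push_cast
    ring
  have hX2 : X2 (fun r => vH r ^ c * wH r ^ d) p =
      2 * A * B * (c * wH p * ((p.2.1:ℂ) - I * p.1) + d * vH p * ((p.2.1:ℂ) + I * p.1)) := by
    rw [X2, fderiv_uH c d p hv hw, fderiv_uH c d p hv hw]
    simp only [hvc, hwd]
    push_cast
    ring
  have hcA : (starRingEnd ℂ) A = A' := by
    rw [hA, hA']; have : ((η - 1 : ℝ) : ℂ) = c - 1 := by push_cast; ring
    rw [← this]; exact hconj_pow (η - 1) _ _ hvarg hconjv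
  have hcB : (starRingEnd ℂ) B = B' := by
    rw [hB, hB']; have : ((τ - 1 : ℝ) : ℂ) = d - 1 := by push_cast; ring
    rw [← this]; exact hconj_pow (τ - 1) _ _ hwarg hconjw
  have hcX1 : (starRingEnd ℂ) (X1 (fun r => vH r ^ c * wH r ^ d) p) =
      2 * A' * B' * (c * vH p * ((p.1:ℂ) - I * p.2.1) + d * wH p * ((p.1:ℂ) + I * p.2.1)) := by
    rw [hX1]
    simp only [map_mul, map_add, map_sub, map_ofNat, hcA, hcB, hconjv, hconjw,
      Complex.conj_ofReal, Complex.conj_I, hc, hd]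
    ring
  have hcX2 : (starRingEnd ℂ) (X2 (fun r => vH r ^ c * wH r ^ d) p) =
      2 * A' * B' * (c * vH p * ((p.2.1:ℂ) + I * p.1) + d * wH p * ((p.2.1:ℂ) - I * p.1)) := by
    rw [hX2]
    simp only [map_mul, map_add, map_sub, map_ofNat, hcA, hcB, hconjv, hconjw,
      Complex.conj_ofReal, Complex.conj_I, hc, hd]
    ring
  rw [hcX1, hcX2, hX1, hX2, hvsplit, hwsplit]
  have hI : (I : ℂ) ^ 2 = -1 := Complex.I_sq
  linear_combination (4 * A * B * A' * B' *
      ((c^2 + d^2) * vH p * wH p * (-(p.1:ℂ)^2 + (I^2 - 2) * (p.2.1:ℂ)^2) +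
        c * d * (wH p^2 * ((p.1:ℂ) + I * p.2.1)^2 + vH p^2 * ((p.1:ℂ) - I * p.2.1)^2))
    + A * B * A' * B' *
      (c * d * (wH p^2 * (-8*(p.1:ℂ)*(p.2.1:ℂ)*I - 4*(p.2.1:ℂ)^2*(I^2-1))
              + vH p^2 * (8*(p.1:ℂ)*(p.2.1:ℂ)*I - 4*(p.2.1:ℂ)^2*(I^2-1)))
        + (c^2 + d^2) * vH p * wH p * (-4*(p.2.1:ℂ)^2*(I^2-1)))) * hI
end
end

section
/- Let L ∈ ℝ with |L| ≠ 1, η = (L-1)/2, τ = -(L+1)/2, v = (x1²+x2²) - 4ix3, w = (x1²+x2²) + 4ix3, and u = v^η w^τ. Then on ℝ³ \ {0}, X1X1u + X2X2u + iL (∂/∂x3) u = 0. -/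
noncomputable section
open Complex

namespace Heis

def φ1 : P3 →L[ℝ] ℂ := Complex.ofRealCLM.comp (ContinuousLinearMap.fst ℝ ℝ (ℝ × ℝ))
def φ2 : P3 →L[ℝ] ℂ :=
  Complex.ofRealCLM.comp ((ContinuousLinearMap.fst ℝ ℝ ℝ).comp (ContinuousLinearMap.snd ℝ ℝ (ℝ × ℝ)))
def φ3 : P3 →L[ℝ] ℂ :=
  Complex.ofRealCLM.comp ((ContinuousLinearMap.snd ℝ ℝ ℝ).comp (ContinuousLinearMap.snd ℝ ℝ (ℝ × ℝ)))

@[simp] lemma φ1_apply (ξ : P3) : φ1 ξ = (ξ.1 : ℂ) := rfl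
@[simp] lemma φ2_apply (ξ : P3) : φ2 ξ = (ξ.2.1 : ℂ) := rfl
@[simp] lemma φ3_apply (ξ : P3) : φ3 ξ = (ξ.2.2 : ℂ) := rfl

lemma hasF_x (r : P3) : HasFDerivAt (fun q : P3 => (q.1 : ℂ)) φ1 r := φ1.hasFDerivAt
lemma hasF_y (r : P3) : HasFDerivAt (fun q : P3 => (q.2.1 : ℂ)) φ2 r := φ2.hasFDerivAt
lemma hasF_t (r : P3) : HasFDerivAt (fun q : P3 => (q.2.2 : ℂ)) φ3 r := φ3.hasFDerivAt

def Dv (r : P3) : P3 →L[ℝ] ℂ :=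
  (2 * (r.1 : ℂ)) • φ1 + (2 * (r.2.1 : ℂ)) • φ2 + (-(4 * Complex.I)) • φ3
def Dw (r : P3) : P3 →L[ℝ] ℂ :=
  (2 * (r.1 : ℂ)) • φ1 + (2 * (r.2.1 : ℂ)) • φ2 + (4 * Complex.I) • φ3

@[simp] lemma Dv_apply (r ξ : P3) :
    Dv r ξ = 2 * (r.1 : ℂ) * (ξ.1 : ℂ) + 2 * (r.2.1 : ℂ) * (ξ.2.1 : ℂ)
      - 4 * Complex.I * (ξ.2.2 : ℂ) := by
  simp [Dv]; try ring
@[simp] lemma Dw_apply (r ξ : P3) :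
    Dw r ξ = 2 * (r.1 : ℂ) * (ξ.1 : ℂ) + 2 * (r.2.1 : ℂ) * (ξ.2.1 : ℂ)
      + 4 * Complex.I * (ξ.2.2 : ℂ) := by
  simp [Dw]; try ring

lemma hasF_vH (r : P3) : HasFDerivAt vH (Dv r) r := by
  have h := (((hasF_x r).mul (hasF_x r)).add ((hasF_y r).mul (hasF_y r))).sub
    ((hasF_t r).const_mul (4 * Complex.I))
  refine (h.congr_of_eventuallyEq ?_).congr_fderiv ?_
  · exact Filter.Eventually.of_forall fun q => by simp [vH]; ring
  · refine ContinuousLinearMap.ext fun ξ => ?_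
    simp [Dv]
    ring

lemma hasF_wH (r : P3) : HasFDerivAt wH (Dw r) r := by
  have h := (((hasF_x r).mul (hasF_x r)).add ((hasF_y r).mul (hasF_y r))).add
    ((hasF_t r).const_mul (4 * Complex.I))
  refine (h.congr_of_eventuallyEq ?_).congr_fderiv ?_
  · exact Filter.Eventually.of_forall fun q => by simp [wH]; ring
  · refine ContinuousLinearMap.ext fun ξ => ?_
    simp [Dw]
    ring



lemma vH_re (r : P3) : (vH r).re = r.1 ^ 2 + r.2.1 ^ 2 := by
  simp [vH, ← Complex.ofReal_pow]
lemma vH_im (r : P3) : (vH r).im = -(4 * r.2.2) := by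
  simp [vH, ← Complex.ofReal_pow]
lemma wH_re (r : P3) : (wH r).re = r.1 ^ 2 + r.2.1 ^ 2 := by
  simp [wH, ← Complex.ofReal_pow]
lemma wH_im (r : P3) : (wH r).im = 4 * r.2.2 := by
  simp [wH, ← Complex.ofReal_pow]

lemma re_pos (r : P3) (hr : r ≠ 0) (h3 : r.2.2 = 0) : 0 < r.1 ^ 2 + r.2.1 ^ 2 := by
  rcases eq_or_ne r.1 0 with h1 | h1
  · rcases eq_or_ne r.2.1 0 with h2 | h2
    · exact absurd (Prod.ext h1 (Prod.ext h2 h3)) hr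
    · positivity
  · positivity

lemma vH_slit (r : P3) (hr : r ≠ 0) : vH r ∈ Complex.slitPlane := by
  rw [Complex.mem_slitPlane_iff, vH_re, vH_im]
  rcases eq_or_ne r.2.2 0 with h3 | h3
  · exact Or.inl (re_pos r hr h3)
  · exact Or.inr (by simpa using h3)

lemma wH_slit (r : P3) (hr : r ≠ 0) : wH r ∈ Complex.slitPlane := by
  rw [Complex.mem_slitPlane_iff, wH_re, wH_im]
  rcases eq_or_ne r.2.2 0 with h3 | h3
  · exact Or.inl (re_pos r hr h3)
  · exact Or.inr (by simpa using h3)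

lemma vH_ne (r : P3) (hr : r ≠ 0) : vH r ≠ 0 := Complex.slitPlane_ne_zero (vH_slit r hr)
lemma wH_ne (r : P3) (hr : r ≠ 0) : wH r ≠ 0 := Complex.slitPlane_ne_zero (wH_slit r hr)

lemma hasF_vpow (α : ℂ) {r : P3} (hr : r ≠ 0) :
    HasFDerivAt (fun s => vH s ^ α) ((α * vH r ^ (α - 1)) • Dv r) r :=
  (Complex.hasStrictDerivAt_cpow_const (vH_slit r hr)).hasDerivAt.comp_hasFDerivAt r (hasF_vH r)

lemma hasF_wpow (α : ℂ) {r : P3} (hr : r ≠ 0) :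
    HasFDerivAt (fun s => wH s ^ α) ((α * wH r ^ (α - 1)) • Dw r) r :=
  (Complex.hasStrictDerivAt_cpow_const (wH_slit r hr)).hasDerivAt.comp_hasFDerivAt r (hasF_wH r)

lemma term_hasF (c α β : ℂ) {q : P3 → ℂ} {q' : P3 →L[ℝ] ℂ} {r : P3}
    (hq : HasFDerivAt q q' r) (hr : r ≠ 0) :
    HasFDerivAt (fun s => c * q s * vH s ^ α * wH s ^ β)
      ((c * q r * vH r ^ α) • ((β * wH r ^ (β - 1)) • Dw r)
        + (wH r ^ β) • ((c * q r) • ((α * vH r ^ (α - 1)) • Dv r)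
            + (vH r ^ α) • (c • q'))) r :=
  ((hq.const_mul c).mul (hasF_vpow α hr)).mul (hasF_wpow β hr)

def qA1 (s : P3) : ℂ := 2 * (s.1 : ℂ) + 2 * Complex.I * (s.2.1 : ℂ)
def qA2 (s : P3) : ℂ := 2 * (s.1 : ℂ) - 2 * Complex.I * (s.2.1 : ℂ)
def qB1 (s : P3) : ℂ := 2 * (s.2.1 : ℂ) - 2 * Complex.I * (s.1 : ℂ)
def qB2 (s : P3) : ℂ := 2 * (s.2.1 : ℂ) + 2 * Complex.I * (s.1 : ℂ)

lemma hasF_qA1 (r : P3) :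
    HasFDerivAt qA1 ((2 : ℂ) • φ1 + (2 * Complex.I) • φ2) r :=
  ((hasF_x r).const_mul 2).add ((hasF_y r).const_mul (2 * Complex.I))
lemma hasF_qA2 (r : P3) :
    HasFDerivAt qA2 ((2 : ℂ) • φ1 - (2 * Complex.I) • φ2) r :=
  ((hasF_x r).const_mul 2).sub ((hasF_y r).const_mul (2 * Complex.I))
lemma hasF_qB1 (r : P3) :
    HasFDerivAt qB1 ((2 : ℂ) • φ2 - (2 * Complex.I) • φ1) r :=
  ((hasF_y r).const_mul 2).sub ((hasF_x r).const_mul (2 * Complex.I))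
lemma hasF_qB2 (r : P3) :
    HasFDerivAt qB2 ((2 : ℂ) • φ2 + (2 * Complex.I) • φ1) r :=
  ((hasF_y r).const_mul 2).add ((hasF_x r).const_mul (2 * Complex.I))

def Afun (η τ : ℂ) (s : P3) : ℂ :=
  η * qA1 s * vH s ^ (η - 1) * wH s ^ τ + τ * qA2 s * vH s ^ η * wH s ^ (τ - 1)
def Bfun (η τ : ℂ) (s : P3) : ℂ :=
  η * qB1 s * vH s ^ (η - 1) * wH s ^ τ + τ * qB2 s * vH s ^ η * wH s ^ (τ - 1)

lemma u_hasF (η τ : ℂ) {r : P3} (hr : r ≠ 0) :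
    HasFDerivAt (fun s => vH s ^ η * wH s ^ τ)
      ((vH r ^ η) • ((τ * wH r ^ (τ - 1)) • Dw r)
        + (wH r ^ τ) • ((η * vH r ^ (η - 1)) • Dv r)) r :=
  (hasF_vpow η hr).mul (hasF_wpow τ hr)

lemma X1u (η τ : ℂ) {r : P3} (hr : r ≠ 0) :
    X1 (fun s => vH s ^ η * wH s ^ τ) r = Afun η τ r := by
  simp only [X1, (u_hasF η τ hr).fderiv, Afun, qA1, qA2]
  simp
  ring

lemma X2u (η τ : ℂ) {r : P3} (hr : r ≠ 0) :
    X2 (fun s => vH s ^ η * wH s ^ τ) r = Bfun η τ r := by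
  simp only [X2, (u_hasF η τ hr).fderiv, Bfun, qB1, qB2]
  simp
  ring

lemma X3u (η τ : ℂ) {r : P3} (hr : r ≠ 0) :
    X3 (fun s => vH s ^ η * wH s ^ τ) r =
      4 * Complex.I * τ * vH r ^ η * wH r ^ (τ - 1)
        - 4 * Complex.I * η * vH r ^ (η - 1) * wH r ^ τ := by
  simp only [X3, (u_hasF η τ hr).fderiv]
  simp
  ring

lemma X1X1u (η τ : ℂ) {p : P3} (hp : p ≠ 0) :
    X1 (X1 fun s => vH s ^ η * wH s ^ τ) p =
      2 * η * τ * (2 * (p.1 : ℂ) + 2 * Complex.I * (p.2.1 : ℂ)) *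
          (2 * (p.1 : ℂ) - 2 * Complex.I * (p.2.1 : ℂ)) * vH p ^ (η - 1) * wH p ^ (τ - 1)
        + η * (η - 1) * (2 * (p.1 : ℂ) + 2 * Complex.I * (p.2.1 : ℂ)) ^ 2 *
            vH p ^ (η - 1 - 1) * wH p ^ τ
        + 2 * η * vH p ^ (η - 1) * wH p ^ τ
        + τ * (τ - 1) * (2 * (p.1 : ℂ) - 2 * Complex.I * (p.2.1 : ℂ)) ^ 2 *
            vH p ^ η * wH p ^ (τ - 1 - 1)
        + 2 * τ * vH p ^ η * wH p ^ (τ - 1) := by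
  have hev : (X1 fun s => vH s ^ η * wH s ^ τ) =ᶠ[nhds p] Afun η τ := by
    filter_upwards [isOpen_compl_singleton.mem_nhds hp] with r hr
    exact X1u η τ hr
  have hA : HasFDerivAt (Afun η τ)
      (((η * qA1 p * vH p ^ (η - 1)) • ((τ * wH p ^ (τ - 1)) • Dw p)
          + (wH p ^ τ) • ((η * qA1 p) • (((η - 1) * vH p ^ (η - 1 - 1)) • Dv p)
              + (vH p ^ (η - 1)) • (η • ((2 : ℂ) • φ1 + (2 * Complex.I) • φ2))))
        + ((τ * qA2 p * vH p ^ η) • (((τ - 1) * wH p ^ (τ - 1 - 1)) • Dw p)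
          + (wH p ^ (τ - 1)) • ((τ * qA2 p) • ((η * vH p ^ (η - 1)) • Dv p)
              + (vH p ^ η) • (τ • ((2 : ℂ) • φ1 - (2 * Complex.I) • φ2))))) p :=
    (term_hasF η (η - 1) τ (hasF_qA1 p) hp).add (term_hasF τ η (τ - 1) (hasF_qA2 p) hp)
  simp only [X1, hev.fderiv_eq, hA.fderiv, qA1, qA2]
  simp
  ring

lemma X2X2u (η τ : ℂ) {p : P3} (hp : p ≠ 0) :
    X2 (X2 fun s => vH s ^ η * wH s ^ τ) p =
      2 * η * τ * (2 * (p.2.1 : ℂ) - 2 * Complex.I * (p.1 : ℂ)) *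
          (2 * (p.2.1 : ℂ) + 2 * Complex.I * (p.1 : ℂ)) * vH p ^ (η - 1) * wH p ^ (τ - 1)
        + η * (η - 1) * (2 * (p.2.1 : ℂ) - 2 * Complex.I * (p.1 : ℂ)) ^ 2 *
            vH p ^ (η - 1 - 1) * wH p ^ τ
        + 2 * η * vH p ^ (η - 1) * wH p ^ τ
        + τ * (τ - 1) * (2 * (p.2.1 : ℂ) + 2 * Complex.I * (p.1 : ℂ)) ^ 2 *
            vH p ^ η * wH p ^ (τ - 1 - 1)
        + 2 * τ * vH p ^ η * wH p ^ (τ - 1) := by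
  have hev : (X2 fun s => vH s ^ η * wH s ^ τ) =ᶠ[nhds p] Bfun η τ := by
    filter_upwards [isOpen_compl_singleton.mem_nhds hp] with r hr
    exact X2u η τ hr
  have hB : HasFDerivAt (Bfun η τ)
      (((η * qB1 p * vH p ^ (η - 1)) • ((τ * wH p ^ (τ - 1)) • Dw p)
          + (wH p ^ τ) • ((η * qB1 p) • (((η - 1) * vH p ^ (η - 1 - 1)) • Dv p)
              + (vH p ^ (η - 1)) • (η • ((2 : ℂ) • φ2 - (2 * Complex.I) • φ1))))
        + ((τ * qB2 p * vH p ^ η) • (((τ - 1) * wH p ^ (τ - 1 - 1)) • Dw p)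
          + (wH p ^ (τ - 1)) • ((τ * qB2 p) • ((η * vH p ^ (η - 1)) • Dv p)
              + (vH p ^ η) • (τ • ((2 : ℂ) • φ2 + (2 * Complex.I) • φ1))))) p :=
    (term_hasF η (η - 1) τ (hasF_qB1 p) hp).add (term_hasF τ η (τ - 1) (hasF_qB2 p) hp)
  simp only [X2, hev.fderiv_eq, hB.fderiv, qB1, qB2]
  simp
  ring

end Heis

theorem heisenberg_drift_2_harmonic (L : ℝ) (hL : |L| ≠ 1) (p : P3) (hp : p ≠ 0) :
    X1 (X1 fun r => vH r ^ (((L - 1) / 2 : ℝ) : ℂ) * wH r ^ ((-(L + 1) / 2 : ℝ) : ℂ)) p +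
      X2 (X2 fun r => vH r ^ (((L - 1) / 2 : ℝ) : ℂ) * wH r ^ ((-(L + 1) / 2 : ℝ) : ℂ)) p +
      Complex.I * (L : ℂ) *
        X3 (fun r => vH r ^ (((L - 1) / 2 : ℝ) : ℂ) * wH r ^ ((-(L + 1) / 2 : ℝ) : ℂ)) p = 0 := by
  have hv0 := Heis.vH_ne p hp
  have hw0 := Heis.wH_ne p hp
  set η : ℂ := (((L - 1) / 2 : ℝ) : ℂ) with hη
  set τ : ℂ := ((-(L + 1) / 2 : ℝ) : ℂ) with hτ
  have hη' : η = ((L : ℂ) - 1) / 2 := by rw [hη]; push_cast; ring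
  have hτ' : τ = -((L : ℂ) + 1) / 2 := by rw [hτ]; push_cast; ring
  rw [Heis.X1X1u η τ hp, Heis.X2X2u η τ hp, Heis.X3u η τ hp]
  have hv2 : vH p ^ (η - 1 - 1) = vH p ^ (η - 2) := by
    rw [show η - 1 - 1 = η - 2 by ring]
  have hw2 : wH p ^ (τ - 1 - 1) = wH p ^ (τ - 2) := by
    rw [show τ - 1 - 1 = τ - 2 by ring]
  have hv1 : vH p ^ (η - 1) = vH p ^ (η - 2) * vH p := by
    rw [show η - 1 = η - 2 + 1 by ring, Complex.cpow_add _ _ hv0, Complex.cpow_one]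
  have hw1 : wH p ^ (τ - 1) = wH p ^ (τ - 2) * wH p := by
    rw [show τ - 1 = τ - 2 + 1 by ring, Complex.cpow_add _ _ hw0, Complex.cpow_one]
  have hv3 : vH p ^ η = vH p ^ (η - 2) * vH p * vH p := by
    nth_rewrite 1 [show η = η - 2 + 1 + 1 by ring]
    rw [Complex.cpow_add _ _ hv0, Complex.cpow_add _ _ hv0, Complex.cpow_one]
  have hw3 : wH p ^ τ = wH p ^ (τ - 2) * wH p * wH p := by
    nth_rewrite 1 [show τ = τ - 2 + 1 + 1 by ring]
    rw [Complex.cpow_add _ _ hw0, Complex.cpow_add _ _ hw0, Complex.cpow_one]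
  rw [hv2, hw2, hv1, hw1, hv3, hw3]
  set a : ℂ := vH p ^ (η - 2) with ha
  set b : ℂ := wH p ^ (τ - 2) with hb
  have hkey : vH p + wH p = 2 * ((p.1 : ℝ) : ℂ) ^ 2 + 2 * ((p.2.1 : ℝ) : ℂ) ^ 2 := by
    simp only [vH, wH]; ring
  rw [hη', hτ']
  linear_combination ((3 : ℂ) * (a) * (b) * (wH p)^2 * (((p.2.1:ℝ):ℂ))^2 + (3 : ℂ) * (a) * (b) * (wH p)^2 * (((p.1:ℝ):ℂ))^2 + (-2 : ℂ) * (a) * (b) * (vH p) * (wH p) * (((p.2.1:ℝ):ℂ))^2 + (-2 : ℂ) * (a) * (b) * (vH p) * (wH p) * (((p.1:ℝ):ℂ))^2 + (3 : ℂ) * (a) * (b) * (vH p)^2 * (((p.2.1:ℝ):ℂ))^2 + (3 : ℂ) * (a) * (b) * (vH p)^2 * (((p.1:ℝ):ℂ))^2 + (-4 : ℂ) * ((L:ℂ)) * (a) * (b) * (wH p)^2 * (((p.2.1:ℝ):ℂ))^2 + (-4 : ℂ) * ((L:ℂ)) * (a) * (b) * (wH p)^2 * (((p.1:ℝ):ℂ))^2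 + (2 : ℂ) * ((L:ℂ)) * (a) * (b) * (vH p) * (wH p)^2 + (4 : ℂ) * ((L:ℂ)) * (a) * (b) * (vH p)^2 * (((p.2.1:ℝ):ℂ))^2 + (4 : ℂ) * ((L:ℂ)) * (a) * (b) * (vH p)^2 * (((p.1:ℝ):ℂ))^2 + (-2 : ℂ) * ((L:ℂ)) * (a) * (b) * (vH p)^2 * (wH p) + (1 : ℂ) * ((L:ℂ))^2 * (a) * (b) * (wH p)^2 * (((p.2.1:ℝ):ℂ))^2 + (1 : ℂ) * ((L:ℂ))^2 * (a) * (b) * (wH p)^2 * (((p.1:ℝ):ℂ))^2 + (2 : ℂ) * ((L:ℂ))^2 * (a) * (b) * (vH p) * (wH p) * (((p.2.1:ℝ):ℂ))^2 + (2 : ℂ) * ((L:ℂ))^2 * (a) * (b) * (vH p) * (wH p) * (((p.1:ℝ):ℂ))^2 + (-2 : ℂ) * ((L:ℂ))^2 * (a) * (b) * (vH p) * (wH p)^2 + (1 : ℂ) * ((L:ℂ))^2 * (a) * (b) * (vH p)^2 * (((p.2.1:ℝ):ℂ))^2 + (1 : ℂ) * ((L:ℂ))^2 * (a) * (b) * (vH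 p)^2 * (((p.1:ℝ):ℂ))^2 + (-2 : ℂ) * ((L:ℂ))^2 * (a) * (b) * (vH p)^2 * (wH p)) * Complex.I_sq + ((-2 : ℂ) * (a) * (b) * (vH p) * (wH p) + (2 : ℂ) * ((L:ℂ))^2 * (a) * (b) * (vH p) * (wH p)) * hkey
end
end

section
/- With g = c(y1-a)^(n+1)+i(n+1)(y2-b), h = conj(g), f = g^α h^β (α, β ∈ ℝ), away from (a,b) one has Y2(‖∇₀f‖²) = 4c³(n+1)⁴(α²+β²)(α+β-1)(y1-a)^(3n)(y2-b)(gh)^(α+β-2). -/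
noncomputable section
open Complex

abbrev P2 : Type := ℝ × ℝ

/-- Grushin vector field Y1 = ∂/∂y1. -/
def Y1 (u : P2 → ℂ) (q : P2) : ℂ := fderiv ℝ u q (1, 0)

/-- Grushin vector field Y2 = c (y1-a)^n ∂/∂y2. -/
def Y2 (a c : ℝ) (n : ℕ) (u : P2 → ℂ) (q : P2) : ℂ :=
  (c : ℂ) * ((q.1 - a : ℝ) : ℂ) ^ n * fderiv ℝ u q (0, 1)

def gG (a b c : ℝ) (n : ℕ) (q : P2) : ℂ :=
  (c : ℂ) * ((q.1 - a : ℝ) : ℂ) ^ (n + 1) + Complex.I * ((n : ℂ) + 1) * ((q.2 - b : ℝ) : ℂ)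

def hG (a b c : ℝ) (n : ℕ) (q : P2) : ℂ :=
  (c : ℂ) * ((q.1 - a : ℝ) : ℂ) ^ (n + 1) - Complex.I * ((n : ℂ) + 1) * ((q.2 - b : ℝ) : ℂ)

/-- Squared horizontal gradient norm of a complex-valued function. -/
def nrm2G (a c : ℝ) (n : ℕ) (u : P2 → ℂ) (q : P2) : ℝ :=
  (Y1 u q * (starRingEnd ℂ) (Y1 u q) + Y2 a c n u q * (starRingEnd ℂ) (Y2 a c n u q)).re

def fF (a b c : ℝ) (n : ℕ) (α β : ℝ) (q : P2) : ℂ :=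
  gG a b c n q ^ (α : ℂ) * hG a b c n q ^ (β : ℂ)

/-! Put `z = g(q)`, so that `f = z ^ α * conj z ^ β` with `∂₁g = k := c (n+1) (y₁-a)^n` real and
`∂₂g = i (n+1)`. The chain rule gives `∂₁f = k (A + B)` and `∂₂f = i (n+1) (A - B)`, where
`A = α z^(α-1) z̄^β` and `B = β z^α z̄^(β-1)`. So `‖∇₀f‖² = k² (|A+B|² + |A-B|²) = 2k² (|A|² + |B|²)`,
and `|A|² = α² |z|^(2(α+β-1))`, `|B|² = β² |z|^(2(α+β-1))` give the closed form
`2c²(n+1)²(α²+β²)(y₁-a)^(2n) (gh)^(α+β-1)`, whose `Y2`-derivative is the claimed one.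

All of this holds where `z` avoids the branch cut of the principal power, i.e. off the half-line
`{y₂ = b, c (y₁-a)^(n+1) ≤ 0}`. On that half-line the right-hand side vanishes, and so does the left:
along the vertical line through `q` the closed form depends only on `(y₂-b)²`, so `‖∇₀f‖²` is even
in `y₂ - b` there. -/

open ComplexConjugate Filter Topology

section General

variable {E : Type*} [NormedAddCommGroup E] [NormedSpace ℝ E]

theorem deriv_eq_zero_of_forall_sub_eq_add {φ : ℝ → E} {x : ℝ}
    (h : ∀ s, φ (x - s) = φ (x + s)) : deriv φ x = 0 := by
  have hneg := deriv_comp_neg (f := fun s => φ (x + s)) (x := 0)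
  simp only [← sub_eq_add_neg, h, neg_zero, deriv_comp_const_add, add_zero] at hneg
  linear_combination (norm := module) (2⁻¹ : ℝ) • hneg

theorem fderiv_apply_one_zero {F : ℝ × ℝ → E} {q : ℝ × ℝ} (h : DifferentiableAt ℝ F q) :
    fderiv ℝ F q (1, 0) = deriv (fun t => F (t, q.2)) q.1 :=
  (h.hasFDerivAt.comp_hasDerivAt q.1 ((hasDerivAt_id q.1).prodMk (hasDerivAt_const _ _))).deriv.symm

theorem fderiv_apply_zero_one {F : ℝ × ℝ → E} {q : ℝ × ℝ} (h : DifferentiableAt ℝ F q) :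
    fderiv ℝ F q (0, 1) = deriv (fun t => F (q.1, t)) q.2 :=
  (h.hasFDerivAt.comp_hasDerivAt q.2 ((hasDerivAt_const _ _).prodMk (hasDerivAt_id q.2))).deriv.symm

theorem fderiv_cpow_mul_conj_cpow_apply {g : E → ℂ} {x : E} (hg : DifferentiableAt ℝ g x)
    (hx : g x ∈ slitPlane) (α β : ℂ) (v : E) :
    fderiv ℝ (fun y => g y ^ α * conj (g y) ^ β) x v =
      α * g x ^ (α - 1) * conj (g x) ^ β * fderiv ℝ g x v +
        β * g x ^ α * conj (g x) ^ (β - 1) * conj (fderiv ℝ g x v) := by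
  have hx' : conj (g x) ∈ slitPlane := by
    rw [mem_slitPlane_iff] at hx ⊢
    simpa using hx
  have hα := (hasStrictDerivAt_cpow_const (c := α) hx).hasDerivAt.comp_hasFDerivAt x
    hg.hasFDerivAt
  have hβ := (hasStrictDerivAt_cpow_const (c := β) hx').hasDerivAt.comp_hasFDerivAt x
    hg.hasFDerivAt.star
  have hf : HasFDerivAt (fun y => g y ^ α * conj (g y) ^ β) _ x := hα.mul hβ
  rw [hf.fderiv]
  simp only [Function.comp_apply, add_apply, smul_apply, ContinuousLinearMap.comp_apply,
    ContinuousLinearEquiv.coe_coe, starL'_apply, RCLike.star_def, smul_eq_mul]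
  ring

end General

theorem Complex.normSq_cpow_mul_conj_cpow {z : ℂ} (hz : z ≠ 0) (u v : ℝ) :
    normSq (z ^ (u : ℂ) * conj z ^ (v : ℂ)) = normSq z ^ (u + v) := by
  have hpos : 0 < ‖z‖ := norm_pos_iff.mpr hz
  rw [← Complex.sq_norm, ← Complex.sq_norm, norm_mul, norm_cpow_real, norm_cpow_real, norm_conj,
    ← Real.rpow_add hpos, ← Real.rpow_natCast, ← Real.rpow_natCast, ← Real.rpow_mul hpos.le,
    ← Real.rpow_mul hpos.le, mul_comm]

namespace Grushin

def gh (a b c : ℝ) (n : ℕ) (q : P2) : ℝ :=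
  c ^ 2 * (q.1 - a) ^ (2 * n + 2) + ((n : ℝ) + 1) ^ 2 * (q.2 - b) ^ 2

section Formulas

variable (a b c : ℝ) (n : ℕ) (q : P2)

theorem gG_eq_add_mul_I :
    gG a b c n q = ↑(c * (q.1 - a) ^ (n + 1)) + ↑(((n : ℝ) + 1) * (q.2 - b)) * I := by
  simp only [gG]
  push_cast
  ring

theorem gG_im : (gG a b c n q).im = ((n : ℝ) + 1) * (q.2 - b) := by
  simp only [gG_eq_add_mul_I, add_im, ofReal_im, mul_I_im, ofReal_re, zero_add]

theorem hG_eq_conj_gG : hG a b c n q = conj (gG a b c n q) := by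
  simp only [gG, hG, map_add, map_mul, map_pow, conj_ofReal, conj_I, map_natCast, map_one]
  ring

theorem fF_eq (α β : ℝ) :
    fF a b c n α β = fun q => gG a b c n q ^ (α : ℂ) * conj (gG a b c n q) ^ (β : ℂ) := by
  funext q
  rw [fF, hG_eq_conj_gG]

theorem normSq_gG : normSq (gG a b c n q) = gh a b c n q := by
  rw [gG_eq_add_mul_I, normSq_add_mul_I, gh]
  ring

theorem gG_mul_hG : gG a b c n q * hG a b c n q = gh a b c n q := by
  rw [hG_eq_conj_gG, mul_conj, normSq_gG]

theorem gh_nonneg : 0 ≤ gh a b c n q :=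
  normSq_gG a b c n q ▸ normSq_nonneg _

theorem differentiable_gG : Differentiable ℝ (gG a b c n) := by
  unfold gG
  fun_prop

theorem differentiable_gh : Differentiable ℝ (gh a b c n) := by
  unfold gh
  fun_prop

theorem fderiv_gG_apply_one_zero :
    fderiv ℝ (gG a b c n) q (1, 0) = ↑(c * ((n : ℝ) + 1) * (q.1 - a) ^ n) := by
  have h : HasDerivAt (fun t => gG a b c n (t, q.2)) _ q.1 :=
    ((((hasDerivAt_id q.1).sub_const a).ofReal_comp.fun_pow (n + 1)).const_mul (c : ℂ)).add_const
      (I * ((n : ℂ) + 1) * ((q.2 - b : ℝ) : ℂ))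
  rw [fderiv_apply_one_zero (differentiable_gG a b c n q), h.deriv, id, Nat.add_sub_cancel]
  push_cast
  ring

theorem fderiv_gG_apply_zero_one : fderiv ℝ (gG a b c n) q (0, 1) = I * ((n : ℂ) + 1) := by
  have h : HasDerivAt (fun t => gG a b c n (q.1, t)) _ q.2 :=
    (((hasDerivAt_id q.2).sub_const b).ofReal_comp.const_mul (I * ((n : ℂ) + 1))).const_add
      ((c : ℂ) * ((q.1 - a : ℝ) : ℂ) ^ (n + 1))
  rw [fderiv_apply_zero_one (differentiable_gG a b c n q), h.deriv]
  simp

theorem hasDerivAt_gh_snd :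
    HasDerivAt (fun t => gh a b c n (q.1, t)) (2 * ((n : ℝ) + 1) ^ 2 * (q.2 - b)) q.2 := by
  have h : HasDerivAt (fun t => gh a b c n (q.1, t)) _ q.2 :=
    ((((hasDerivAt_id q.2).sub_const b).pow 2).const_mul (((n : ℝ) + 1) ^ 2)).const_add
      (c ^ 2 * (q.1 - a) ^ (2 * n + 2))
  exact h.congr_deriv (by simp; ring)

end Formulas

variable {a b c : ℝ} {n : ℕ} {α β : ℝ} {q : P2}

theorem gG_mem_slitPlane_of_snd_ne (h : q.2 ≠ b) : gG a b c n q ∈ slitPlane := by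
  refine mem_slitPlane_iff.mpr (Or.inr ?_)
  rw [gG_im]
  exact mul_ne_zero (by positivity) (sub_ne_zero.mpr h)

theorem snd_eq_of_gG_notMem_slitPlane (h : gG a b c n q ∉ slitPlane) : q.2 = b :=
  not_imp_comm.mp gG_mem_slitPlane_of_snd_ne h

theorem nrm2G_fF_of_mem_slitPlane (hs : gG a b c n q ∈ slitPlane) :
    nrm2G a c n (fF a b c n α β) q =
      2 * c ^ 2 * ((n : ℝ) + 1) ^ 2 * (α ^ 2 + β ^ 2) * (q.1 - a) ^ (2 * n) *
        gh a b c n q ^ (α + β - 1) := by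
  set z := gG a b c n q
  have hz : z ≠ 0 := slitPlane_ne_zero hs
  set k : ℝ := c * ((n : ℝ) + 1) * (q.1 - a) ^ n
  set A : ℂ := α * (z ^ ((α - 1 : ℝ) : ℂ) * conj z ^ (β : ℂ))
  set B : ℂ := β * (z ^ (α : ℂ) * conj z ^ ((β - 1 : ℝ) : ℂ))
  have hY1 : Y1 (fF a b c n α β) q = k * (A + B) := by
    rw [Y1, fF_eq, fderiv_cpow_mul_conj_cpow_apply (differentiable_gG a b c n q) hs,
      fderiv_gG_apply_one_zero, conj_ofReal]
    simp only [k, A, B, z]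
    push_cast
    ring
  have hY2 : Y2 a c n (fF a b c n α β) q = k * I * (A - B) := by
    rw [Y2, fF_eq, fderiv_cpow_mul_conj_cpow_apply (differentiable_gG a b c n q) hs,
      fderiv_gG_apply_zero_one]
    simp only [map_mul, conj_I, map_add, map_natCast, map_one, k, A, B, z]
    push_cast
    ring
  have hA : normSq A = α ^ 2 * gh a b c n q ^ (α + β - 1) := by
    rw [normSq_mul, normSq_ofReal, normSq_cpow_mul_conj_cpow hz, normSq_gG, sub_add_eq_add_sub]
    ring
  have hB : normSq B = β ^ 2 * gh a b c n q ^ (α + β - 1) := by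
    rw [normSq_mul, normSq_ofReal, normSq_cpow_mul_conj_cpow hz, normSq_gG, add_sub_assoc']
    ring
  rw [nrm2G, mul_conj, mul_conj, ← ofReal_add, ofReal_re, hY1, hY2, normSq_mul, normSq_mul,
    normSq_mul, normSq_I, normSq_ofReal, normSq_add, normSq_sub, hA, hB]
  ring

theorem Y2_nrm2G_fF_of_mem_slitPlane (hs : gG a b c n q ∈ slitPlane) :
    Y2 a c n (fun r => ((nrm2G a c n (fF a b c n α β) r : ℝ) : ℂ)) q =
      4 * (c : ℂ) ^ 3 * ((n : ℂ) + 1) ^ 4 * ((α : ℂ) ^ 2 + (β : ℂ) ^ 2) *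
        ((α : ℂ) + (β : ℂ) - 1) * ((q.1 - a : ℝ) : ℂ) ^ (3 * n) * ((q.2 - b : ℝ) : ℂ) *
        (gG a b c n q * hG a b c n q) ^ ((α : ℂ) + (β : ℂ) - 2) := by
  set K : ℝ → ℝ := fun y₁ => 2 * c ^ 2 * ((n : ℝ) + 1) ^ 2 * (α ^ 2 + β ^ 2) * (y₁ - a) ^ (2 * n)
  have hgh : gh a b c n q ≠ 0 := by
    rw [← normSq_gG]
    exact (normSq_pos.mpr (slitPlane_ne_zero hs)).ne'
  have hev : (fun r => ((nrm2G a c n (fF a b c n α β) r : ℝ) : ℂ)) =ᶠ[𝓝 q]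
      fun r => ((K r.1 * gh a b c n r ^ (α + β - 1) : ℝ) : ℂ) := by
    filter_upwards [(differentiable_gG a b c n).continuous.continuousAt.preimage_mem_nhds
      (isOpen_slitPlane.mem_nhds hs)] with r hr
    rw [nrm2G_fF_of_mem_slitPlane hr]
  have hdiff : DifferentiableAt ℝ (fun r => ((K r.1 * gh a b c n r ^ (α + β - 1) : ℝ) : ℂ)) q :=
    ofRealCLM.differentiableAt.comp q
      ((by fun_prop : DifferentiableAt ℝ (fun r : P2 => K r.1) q).mul
        ((differentiable_gh a b c n q).rpow_const (Or.inl hgh)))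
  have hline := (((hasDerivAt_gh_snd a b c n q).rpow_const (p := α + β - 1)
    (Or.inl hgh)).const_mul (K q.1)).ofReal_comp
  rw [Y2, hev.fderiv_eq, fderiv_apply_zero_one hdiff, hline.deriv, gG_mul_hG,
    show (α : ℂ) + β - 2 = ((α + β - 2 : ℝ) : ℂ) by push_cast; ring,
    ← ofReal_cpow (gh_nonneg a b c n q), show α + β - 1 - 1 = α + β - 2 by ring]
  simp only [K]
  push_cast
  ring

theorem fderiv_nrm2G_fF_apply_zero_one_of_snd_eq (hb : q.2 = b) :
    fderiv ℝ (fun r => ((nrm2G a c n (fF a b c n α β) r : ℝ) : ℂ)) q (0, 1) = 0 := by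
  by_cases hN : DifferentiableAt ℝ (fun r => ((nrm2G a c n (fF a b c n α β) r : ℝ) : ℂ)) q
  · rw [fderiv_apply_zero_one hN, hb]
    refine deriv_eq_zero_of_forall_sub_eq_add fun s => ?_
    rcases eq_or_ne s 0 with rfl | hs
    · simp
    have hgh : gh a b c n (q.1, b - s) = gh a b c n (q.1, b + s) := by
      simp only [gh]
      ring
    rw [nrm2G_fF_of_mem_slitPlane (gG_mem_slitPlane_of_snd_ne (by simpa using hs)),
      nrm2G_fF_of_mem_slitPlane (gG_mem_slitPlane_of_snd_ne (by simpa using hs)), hgh]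
  · rw [fderiv_zero_of_not_differentiableAt hN, zero_apply]

end Grushin

theorem grushin_Y2_gradient_norm_sq_general (a b c : ℝ) (n : ℕ) (α β : ℝ)
    (q : P2) :
    Y2 a c n (fun r => ((nrm2G a c n (fF a b c n α β) r : ℝ) : ℂ)) q =
      4 * (c : ℂ) ^ 3 * ((n : ℂ) + 1) ^ 4 * ((α : ℂ) ^ 2 + (β : ℂ) ^ 2) *
        ((α : ℂ) + (β : ℂ) - 1) * ((q.1 - a : ℝ) : ℂ) ^ (3 * n) * ((q.2 - b : ℝ) : ℂ) *
        (gG a b c n q * hG a b c n q) ^ ((α : ℂ) + (β : ℂ) - 2) := by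
  by_cases hs : gG a b c n q ∈ slitPlane
  · exact Grushin.Y2_nrm2G_fF_of_mem_slitPlane hs
  · have hb : q.2 = b := Grushin.snd_eq_of_gG_notMem_slitPlane hs
    rw [Y2, Grushin.fderiv_nrm2G_fF_apply_zero_one_of_snd_eq hb, hb]
    simp

theorem grushin_Y2_gradient_norm_sq (a b c : ℝ) (hc : c ≠ 0) (n : ℕ) (α β : ℝ)
    (q : P2) (hq : q ≠ (a, b)) :
    Y2 a c n (fun r => ((nrm2G a c n (fF a b c n α β) r : ℝ) : ℂ)) q =
      4 * (c : ℂ) ^ 3 * ((n : ℂ) + 1) ^ 4 * ((α : ℂ) ^ 2 + (β : ℂ) ^ 2) *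
        ((α : ℂ) + (β : ℂ) - 1) * ((q.1 - a : ℝ) : ℂ) ^ (3 * n) * ((q.2 - b : ℝ) : ℂ) *
        (gG a b c n q * hG a b c n q) ^ ((α : ℂ) + (β : ℂ) - 2) :=
  grushin_Y2_gradient_norm_sq_general a b c n α β q
end
end

section
/- For p = n+2, the function ψ = log(c²(y1-a)^(2n+2)+(n+1)²(y2-b)²) satisfies Δ_(n+2) ψ = Y1(‖∇₀ψ‖^n Y1ψ) + Y2(‖∇₀ψ‖^n Y2ψ) = 0 on ℝ² \ {(a,b)}. -/
noncomputable section

/-- Grushin vector field Y1 = ∂/∂y1 (real-valued functions). -/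
def Y1r (u : P2 → ℝ) (q : P2) : ℝ := fderiv ℝ u q (1, 0)

/-- Grushin vector field Y2 = c (y1-a)^n ∂/∂y2 (real-valued functions). -/
def Y2r (a c : ℝ) (n : ℕ) (u : P2 → ℝ) (q : P2) : ℝ :=
  c * (q.1 - a) ^ n * fderiv ℝ u q (0, 1)

def psiLog (a b c : ℝ) (n : ℕ) (q : P2) : ℝ :=
  Real.log (c ^ 2 * (q.1 - a) ^ (2 * n + 2) + ((n : ℝ) + 1) ^ 2 * (q.2 - b) ^ 2)

/-!
Write `u = y₁ - a`, `v = y₂ - b` and `D = c²u^(2n+2) + (n+1)²v²`, so that `ψ = log D`. Then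
`‖∇₀ψ‖ = 2(n+1)|c||u|ⁿ/√D`, and the fluxes `Fᵢ = ‖∇₀ψ‖ⁿ Yᵢψ` are, up to a common constant,
`c²|u|^(n²) u^(2n+1) D^(-(n+2)/2)` and `(n+1)c |u|^(n²) uⁿ v D^(-(n+2)/2)`. Since
`x ↦ |x|^k x^j` is differentiable also at `0` once `j ≥ 1`, they are differentiable on the
line `u = 0` as well, and a direct computation gives
`Y₁F₁ + Y₂F₂ ∝ |u|^(n²) u^(2n) D^(-(n+2)/2) (n+2) (1 - (c²u^(2n+2) + (n+1)²v²)/D) = 0`.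
-/

open Asymptotics Topology ContinuousLinearMap

theorem hasDerivAt_abs_pow_mul_pow {k j : ℕ} (hkj : k = 0 ∨ j ≠ 0) (x : ℝ) :
    HasDerivAt (fun x : ℝ => |x| ^ k * x ^ j) ((k + j) * |x| ^ k * x ^ (j - 1)) x := by
  rcases hkj with rfl | hj
  · simpa using hasDerivAt_pow j x
  obtain ⟨j, rfl⟩ := Nat.exists_eq_add_one_of_ne_zero hj
  rcases eq_or_ne x 0 with rfl | hx
  · rcases k with _ | k
    · simpa using hasDerivAt_pow (j + 1) (0 : ℝ)
    have hbig : (fun h : ℝ => |h| ^ (k + 1) * h ^ (j + 1)) =O[𝓝 0] fun h => h ^ (k + j + 2) :=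
      isBigO_of_le _ fun h => le_of_eq <| by
        simp only [norm_mul, norm_pow, Real.norm_eq_abs, abs_abs]; ring
    rw [hasDerivAt_iff_isLittleO_nhds_zero]
    simpa using hbig.trans_isLittleO (isLittleO_pow_id (by omega : 1 < k + j + 2))
  · refine (((hasDerivAt_pow k |x|).comp x (hasDerivAt_abs hx)).fun_mul
      (hasDerivAt_pow (j + 1) x)).congr_deriv ?_
    rcases k with _ | k
    · simp
    · simp only [Nat.add_sub_cancel, pow_succ, Function.comp]
      push_cast
      linear_combination (↑k + 1) * |x| ^ k * x ^ j * self_mul_sign x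

theorem HasFDerivAt.inv_sqrt_pow {E : Type*} [NormedAddCommGroup E] [NormedSpace ℝ E]
    {f : E → ℝ} {f' : E →L[ℝ] ℝ} {x : E} (hf : HasFDerivAt f f' x) (hx : 0 < f x) (k : ℕ) :
    HasFDerivAt (fun y => (√(f y) ^ k)⁻¹) ((-(k / 2) * (√(f x) ^ k)⁻¹ / f x) • f') x := by
  have hS : 0 < √(f x) := Real.sqrt_pos.2 hx
  refine ((hasDerivAt_inv (pow_pos hS k).ne').comp_hasFDerivAt x
    ((hf.sqrt hx.ne').pow k)).congr_fderiv ?_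
  rw [smul_smul, smul_smul]
  congr 1
  rcases k with _ | k
  · simp
  · have hS2 : √(f x) ^ 2 = f x := Real.sq_sqrt hx.le
    set S := √(f x)
    rw [← hS2]
    simp only [nsmul_eq_mul, Nat.add_sub_cancel]
    field_simp
    ring

namespace Grushin

def denom (a b c : ℝ) (n : ℕ) (r : P2) : ℝ :=
  c ^ 2 * (r.1 - a) ^ (2 * n + 2) + ((n : ℝ) + 1) ^ 2 * (r.2 - b) ^ 2

def gradNorm (a b c : ℝ) (n : ℕ) (r : P2) : ℝ :=
  √(Y1r (psiLog a b c n) r ^ 2 + Y2r a c n (psiLog a b c n) r ^ 2)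

def weight (a b c : ℝ) (n : ℕ) (r : P2) : ℝ := (√(denom a b c n r) ^ (n + 2))⁻¹

variable {a b c : ℝ} {n : ℕ} {r : P2}

theorem denom_pos (hc : c ≠ 0) (hr : r ≠ (a, b)) : 0 < denom a b c n r := by
  rw [denom, show 2 * n + 2 = 2 * (n + 1) by ring, pow_mul']
  rcases eq_or_ne r.1 a with h | h
  · have : r.2 - b ≠ 0 := sub_ne_zero.2 fun h' => hr (Prod.ext h h')
    positivity
  · have : r.1 - a ≠ 0 := sub_ne_zero.2 h
    positivity

theorem hasFDerivAt_denom :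
    HasFDerivAt (denom a b c n)
      ((2 * ((n : ℝ) + 1) * c ^ 2 * (r.1 - a) ^ (2 * n + 1)) • fst ℝ ℝ ℝ +
        (2 * ((n : ℝ) + 1) ^ 2 * (r.2 - b)) • snd ℝ ℝ ℝ) r := by
  have hu := ((hasDerivAt_pow (2 * n + 2) (r.1 - a)).comp_hasFDerivAt r
    ((hasFDerivAt_fst (𝕜 := ℝ) (p := r)).sub_const a)).const_mul (c ^ 2)
  have hv := ((hasDerivAt_pow 2 (r.2 - b)).comp_hasFDerivAt r
    ((hasFDerivAt_snd (𝕜 := ℝ) (p := r)).sub_const b)).const_mul (((n : ℝ) + 1) ^ 2)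
  refine (hu.add hv).congr_fderiv ?_
  rw [smul_smul, smul_smul]
  push_cast
  ring_nf

theorem hasFDerivAt_psiLog (hc : c ≠ 0) (hr : r ≠ (a, b)) :
    HasFDerivAt (psiLog a b c n)
      ((denom a b c n r)⁻¹ •
        ((2 * ((n : ℝ) + 1) * c ^ 2 * (r.1 - a) ^ (2 * n + 1)) • fst ℝ ℝ ℝ +
          (2 * ((n : ℝ) + 1) ^ 2 * (r.2 - b)) • snd ℝ ℝ ℝ)) r :=
  hasFDerivAt_denom.log (denom_pos hc hr).ne'

theorem Y1r_psiLog (hc : c ≠ 0) (hr : r ≠ (a, b)) :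
    Y1r (psiLog a b c n) r = 2 * (n + 1) * c ^ 2 * (r.1 - a) ^ (2 * n + 1) / denom a b c n r := by
  rw [Y1r, (hasFDerivAt_psiLog hc hr).fderiv]
  simp only [smul_add, add_apply, smul_apply, coe_fst', coe_snd', smul_eq_mul, mul_one, mul_zero,
    add_zero]
  ring

theorem Y2r_psiLog (hc : c ≠ 0) (hr : r ≠ (a, b)) :
    Y2r a c n (psiLog a b c n) r =
      2 * (n + 1) ^ 2 * c * (r.1 - a) ^ n * (r.2 - b) / denom a b c n r := by
  rw [Y2r, (hasFDerivAt_psiLog hc hr).fderiv]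
  simp only [smul_add, add_apply, smul_apply, coe_fst', coe_snd', smul_eq_mul, mul_one, mul_zero,
    zero_add]
  ring

theorem gradNorm_eq (hc : c ≠ 0) (hr : r ≠ (a, b)) :
    gradNorm a b c n r = 2 * (n + 1) * |c| * |r.1 - a| ^ n / √(denom a b c n r) := by
  have hD := denom_pos (n := n) hc hr
  have hsq : Y1r (psiLog a b c n) r ^ 2 + Y2r a c n (psiLog a b c n) r ^ 2 =
      (2 * (n + 1) * c * (r.1 - a) ^ n) ^ 2 / denom a b c n r := by
    rw [Y1r_psiLog hc hr, Y2r_psiLog hc hr]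
    field_simp
    rw [denom]
    ring
  rw [gradNorm, hsq, Real.sqrt_div' _ hD.le, Real.sqrt_sq_eq_abs, abs_mul,
    abs_mul, abs_mul, abs_pow, abs_of_pos (by positivity : (0 : ℝ) < n + 1), abs_two]

theorem gradNorm_pow_eq (hc : c ≠ 0) (hr : r ≠ (a, b)) :
    gradNorm a b c n r ^ n =
      (2 * (n + 1)) ^ n * |c| ^ n * |r.1 - a| ^ (n * n) / √(denom a b c n r) ^ n := by
  rw [gradNorm_eq hc hr, div_pow, mul_pow, mul_pow, pow_mul]

theorem weight_eq (hc : c ≠ 0) (hr : r ≠ (a, b)) :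
    weight a b c n r = (√(denom a b c n r) ^ n * denom a b c n r)⁻¹ := by
  rw [weight, pow_add, Real.sq_sqrt (denom_pos hc hr).le]

theorem gradNorm_pow_mul_Y1r_eq (hc : c ≠ 0) (hr : r ≠ (a, b)) :
    gradNorm a b c n r ^ n * Y1r (psiLog a b c n) r =
      (2 * (n + 1)) ^ (n + 1) * |c| ^ n * c ^ 2 *
        (|r.1 - a| ^ (n * n) * (r.1 - a) ^ (2 * n + 1) * weight a b c n r) := by
  rw [gradNorm_pow_eq hc hr, Y1r_psiLog hc hr, weight_eq hc hr]
  ring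

theorem gradNorm_pow_mul_Y2r_eq (hc : c ≠ 0) (hr : r ≠ (a, b)) :
    gradNorm a b c n r ^ n * Y2r a c n (psiLog a b c n) r =
      (2 * (n + 1)) ^ (n + 1) * |c| ^ n * ((n + 1) * c) *
        (|r.1 - a| ^ (n * n) * (r.1 - a) ^ n * (r.2 - b) * weight a b c n r) := by
  rw [gradNorm_pow_eq hc hr, Y2r_psiLog hc hr, weight_eq hc hr]
  ring

theorem Y1r_gradNorm_pow_mul_Y1r (hc : c ≠ 0) (hr : r ≠ (a, b)) :
    Y1r (fun y => gradNorm a b c n y ^ n * Y1r (psiLog a b c n) y) r =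
      (2 * (n + 1)) ^ (n + 1) * |c| ^ n * c ^ 2 * |r.1 - a| ^ (n * n) * (r.1 - a) ^ (2 * n) *
        weight a b c n r * (n + 1) *
          (n + 1 - (n + 2) * c ^ 2 * (r.1 - a) ^ (2 * n + 2) / denom a b c n r) := by
  have hu := (hasFDerivAt_fst (𝕜 := ℝ) (p := r)).sub_const a
  have hφ := (hasDerivAt_abs_pow_mul_pow (k := n * n) (j := 2 * n + 1) (Or.inr (by omega))
    (r.1 - a)).comp_hasFDerivAt r hu
  have hW := (hasFDerivAt_denom (n := n)).inv_sqrt_pow (denom_pos hc hr) (n + 2)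
  have hF := ((hφ.mul hW).const_mul
    ((2 * (n + 1)) ^ (n + 1) * |c| ^ n * c ^ 2)).congr_of_eventuallyEq
    ((eventually_ne_nhds hr).mono fun r' hr' => gradNorm_pow_mul_Y1r_eq hc hr')
  rw [Y1r, hF.fderiv]
  simp only [Function.comp_apply, smul_add, add_apply, smul_apply, coe_fst', coe_snd', smul_eq_mul,
    mul_one, mul_zero, add_zero, add_tsub_cancel_right, weight]
  push_cast
  field_simp
  ring

theorem Y2r_gradNorm_pow_mul_Y2r (hc : c ≠ 0) (hr : r ≠ (a, b)) :
    Y2r a c n (fun y => gradNorm a b c n y ^ n * Y2r a c n (psiLog a b c n) y) r =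
      (2 * (n + 1)) ^ (n + 1) * |c| ^ n * c ^ 2 * |r.1 - a| ^ (n * n) * (r.1 - a) ^ (2 * n) *
        weight a b c n r * (n + 1) *
          (1 - (n + 2) * (n + 1) ^ 2 * (r.2 - b) ^ 2 / denom a b c n r) := by
  have hu := (hasFDerivAt_fst (𝕜 := ℝ) (p := r)).sub_const a
  have hv := (hasFDerivAt_snd (𝕜 := ℝ) (p := r)).sub_const b
  have hφ := (hasDerivAt_abs_pow_mul_pow (k := n * n) (j := n)
    (by rcases eq_or_ne n 0 with h | h <;> simp [h]) (r.1 - a)).comp_hasFDerivAt r hu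
  have hW := (hasFDerivAt_denom (n := n)).inv_sqrt_pow (denom_pos hc hr) (n + 2)
  have hF := (((hφ.mul hv).mul hW).const_mul
    ((2 * (n + 1)) ^ (n + 1) * |c| ^ n * ((n + 1) * c))).congr_of_eventuallyEq
    ((eventually_ne_nhds hr).mono fun r' hr' => gradNorm_pow_mul_Y2r_eq hc hr')
  rw [Y2r, hF.fderiv]
  simp only [Pi.mul_apply, Function.comp_apply, smul_add, add_apply, smul_apply, coe_fst',
    coe_snd', smul_eq_mul, mul_one, mul_zero, add_zero, zero_add, weight]
  push_cast
  field_simp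
  ring

end Grushin

theorem grushin_np2_harmonic_general (a b c : ℝ) (hc : c ≠ 0) (n : ℕ)
    (q : P2) (hq : q ≠ (a, b)) :
    Y1r (fun r => Real.sqrt ((Y1r (psiLog a b c n) r) ^ 2 +
          (Y2r a c n (psiLog a b c n) r) ^ 2) ^ n * Y1r (psiLog a b c n) r) q +
      Y2r a c n (fun r => Real.sqrt ((Y1r (psiLog a b c n) r) ^ 2 +
          (Y2r a c n (psiLog a b c n) r) ^ 2) ^ n * Y2r a c n (psiLog a b c n) r) q = 0 := by
  change Y1r (fun r => Grushin.gradNorm a b c n r ^ n * Y1r (psiLog a b c n) r) q +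
    Y2r a c n (fun r => Grushin.gradNorm a b c n r ^ n * Y2r a c n (psiLog a b c n) r) q = 0
  rw [Grushin.Y1r_gradNorm_pow_mul_Y1r hc hq, Grushin.Y2r_gradNorm_pow_mul_Y2r hc hq, ← mul_add]
  have hD := Grushin.denom_pos (n := n) hc hq
  refine mul_eq_zero_of_right _ ?_
  field_simp
  rw [Grushin.denom]
  ring

theorem grushin_np2_harmonic (a b c : ℝ) (hc : c ≠ 0) (n : ℕ) (hn : 1 ≤ n)
    (q : P2) (hq : q ≠ (a, b)) :
    Y1r (fun r => Real.sqrt ((Y1r (psiLog a b c n) r) ^ 2 +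
          (Y2r a c n (psiLog a b c n) r) ^ 2) ^ n * Y1r (psiLog a b c n) r) q +
      Y2r a c n (fun r => Real.sqrt ((Y1r (psiLog a b c n) r) ^ 2 +
          (Y2r a c n (psiLog a b c n) r) ^ 2) ^ n * Y2r a c n (psiLog a b c n) r) q = 0 :=
  grushin_np2_harmonic_general a b c hc n q hq
end
end
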